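/- For k = 4, D_min(w₁) ≥ 6(1/2 - w₁)² for all w₁ ∈ [0,1], where D_min(w₁) = w₁·ln(6(w₁ - w₂(w₁))) + (1-w₁)·ln(6(1 - w₁ - w₂(w₁))) and w₂(w₁) = (2 - √(12(w₁-1/2)² + 1))/3. -/

import Mathlib

/-!
Write `v = w2fun w`, the smaller root of `3 v ^ 2 - 4 v + 4 w (1 - w) = 0`. By the envelope
theorem `Dmin' w = log (6 (w - v)) - log (6 (1 - w - v))`, and differentiating once more gives
`Dmin'' = 4 / (v (2 - 3 v)) ≥ 12`. Since `Dmin` and `6 (1/2 - w) ^ 2` agree to first order at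
`w = 1/2`, comparing derivatives twice on `[1/2, w]` gives the bound for `1/2 ≤ w < 1`; the
endpoint `w = 1` is `log 6 ≥ 3/2`, and `w < 1/2` follows from the symmetry `w ↦ 1 - w`.
-/

noncomputable def w2fun (w₁ : ℝ) : ℝ := (2 - Real.sqrt (12 * (w₁ - 1 / 2) ^ 2 + 1)) / 3

noncomputable def Dmin (w₁ : ℝ) : ℝ :=
  w₁ * Real.log (6 * (w₁ - w2fun w₁)) + (1 - w₁) * Real.log (6 * (1 - w₁ - w2fun w₁))

open Real Set

theorem le_of_hasDerivAt_le {f g f' g' : ℝ → ℝ} {a b : ℝ}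
    (hf : ∀ x ∈ Icc a b, HasDerivAt f (f' x) x) (hg : ∀ x ∈ Icc a b, HasDerivAt g (g' x) x)
    (ha : f a ≤ g a) (hderiv : ∀ x ∈ Ico a b, f' x ≤ g' x) (hab : a ≤ b) : f b ≤ g b :=
  image_le_of_deriv_right_le_deriv_boundary
    (fun x hx => (hf x hx).continuousAt.continuousWithinAt)
    (fun x hx => (hf x (Ico_subset_Icc_self hx)).hasDerivWithinAt) ha
    (fun x hx => (hg x hx).continuousAt.continuousWithinAt)
    (fun x hx => (hg x (Ico_subset_Icc_self hx)).hasDerivWithinAt) hderiv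
    (right_mem_Icc.2 hab)

section

variable {w : ℝ}

theorem one_le_two_sub_three_mul_w2fun (w : ℝ) : 1 ≤ 2 - 3 * w2fun w := by
  rw [w2fun]
  have : 1 ≤ √(12 * (w - 1 / 2) ^ 2 + 1) := one_le_sqrt.2 (by nlinarith)
  linarith

theorem w2fun_quadratic (w : ℝ) : 3 * w2fun w ^ 2 - 4 * w2fun w + 4 * w * (1 - w) = 0 := by
  have h := sq_sqrt (by positivity : (0 : ℝ) ≤ 12 * (w - 1 / 2) ^ 2 + 1)
  rw [w2fun]
  linear_combination h / 3

theorem w2fun_one_sub (w : ℝ) : w2fun (1 - w) = w2fun w := by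
  rw [w2fun, w2fun]
  ring_nf

theorem w2fun_half : w2fun (1 / 2) = 1 / 3 := by
  norm_num [w2fun]

theorem w2fun_one : w2fun 1 = 0 := by
  rw [w2fun, show (12 * ((1 : ℝ) - 1 / 2) ^ 2 + 1) = 2 ^ 2 by norm_num, sqrt_sq zero_le_two]
  norm_num

theorem w2fun_pos (hw : w ∈ Ioo 0 1) : 0 < w2fun w := by
  have h := w2fun_quadratic w
  nlinarith [hw.1, hw.2, one_le_two_sub_three_mul_w2fun w]

theorem w2fun_lt_self (hw : w ∈ Ioo 0 1) : w2fun w < w := by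
  have h := w2fun_quadratic w
  nlinarith [hw.1, hw.2, one_le_two_sub_three_mul_w2fun w, w2fun_pos hw]

theorem w2fun_lt_one_sub (hw : w ∈ Ioo 0 1) : w2fun w < 1 - w := by
  simpa [w2fun_one_sub] using w2fun_lt_self (w := 1 - w) ⟨by linarith [hw.2], by linarith [hw.1]⟩

theorem hasDerivAt_w2fun (w : ℝ) :
    HasDerivAt w2fun (2 * (1 - 2 * w) / (2 - 3 * w2fun w)) w := by
  have hq : HasDerivAt (fun x : ℝ => 12 * (x - 1 / 2) ^ 2 + 1) (24 * (w - 1 / 2)) w :=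
    (((((hasDerivAt_id w).sub_const (1 / 2)).pow 2).const_mul 12).add_const 1).congr_deriv
      (by simp only [id]; ring)
  refine (((hq.sqrt (by positivity)).const_sub 2).div_const 3).congr_deriv ?_
  rw [w2fun, mul_div_cancel₀ _ three_ne_zero, sub_sub_cancel]
  field_simp
  ring

noncomputable def Dmin' (w : ℝ) : ℝ :=
  log (6 * (w - w2fun w)) - log (6 * (1 - w - w2fun w))

theorem hasDerivAt_log_six_mul_sub_w2fun (hw : w ∈ Ioo 0 1) :
    HasDerivAt (fun x => log (6 * (x - w2fun x)))
      (6 * (1 - 2 * (1 - 2 * w) / (2 - 3 * w2fun w)) / (6 * (w - w2fun w))) w :=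
  (((hasDerivAt_id w).sub (hasDerivAt_w2fun w)).const_mul 6).log
    (by simp only [Pi.sub_apply, id]; linarith [w2fun_lt_self hw])

theorem hasDerivAt_log_six_mul_one_sub_sub_w2fun (hw : w ∈ Ioo 0 1) :
    HasDerivAt (fun x => log (6 * (1 - x - w2fun x)))
      (6 * (-1 - 2 * (1 - 2 * w) / (2 - 3 * w2fun w)) / (6 * (1 - w - w2fun w))) w :=
  ((((hasDerivAt_id w).const_sub 1).sub (hasDerivAt_w2fun w)).const_mul 6).log
    (by simp only [Pi.sub_apply, id]; linarith [w2fun_lt_one_sub hw])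

/-- Envelope theorem: the terms coming from `w2fun'` cancel by the quadratic equation for
`w2fun`. -/
theorem hasDerivAt_Dmin (hw : w ∈ Ioo 0 1) : HasDerivAt Dmin (Dmin' w) w := by
  have hA := hasDerivAt_log_six_mul_sub_w2fun hw
  have hB := hasDerivAt_log_six_mul_one_sub_sub_w2fun hw
  have hd := div_mul_cancel₀ (2 * (1 - 2 * w))
    (by linarith [one_le_two_sub_three_mul_w2fun w] : 2 - 3 * w2fun w ≠ 0)
  generalize 2 * (1 - 2 * w) / (2 - 3 * w2fun w) = d at hA hB hd
  refine (((hasDerivAt_id w).mul hA).add (((hasDerivAt_id w).const_sub 1).mul hB)).congr_deriv ?_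
  have hA0 : w - w2fun w ≠ 0 := by linarith [w2fun_lt_self hw]
  have hB0 : 1 - w - w2fun w ≠ 0 := by linarith [w2fun_lt_one_sub hw]
  have hq := w2fun_quadratic w
  rw [Dmin']
  generalize w2fun w = v at *
  simp only [id]
  field_simp
  linear_combination (-v / 2) * hd + (-d / 2) * hq

theorem hasDerivAt_Dmin' (hw : w ∈ Ioo 0 1) :
    HasDerivAt Dmin' (4 / (w2fun w * (2 - 3 * w2fun w))) w := by
  refine ((hasDerivAt_log_six_mul_sub_w2fun hw).sub
    (hasDerivAt_log_six_mul_one_sub_sub_w2fun hw)).congr_deriv ?_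
  have hv0 := (w2fun_pos hw).ne'
  have hA0 : w - w2fun w ≠ 0 := by linarith [w2fun_lt_self hw]
  have hB0 : 1 - w - w2fun w ≠ 0 := by linarith [w2fun_lt_one_sub hw]
  have hs0 : 2 - 3 * w2fun w ≠ 0 := by linarith [one_le_two_sub_three_mul_w2fun w]
  field_simp
  linear_combination (2 * w2fun w - 1) * w2fun_quadratic w

theorem twelve_le_four_div_w2fun_mul (hw : w ∈ Ioo 0 1) :
    12 ≤ 4 / (w2fun w * (2 - 3 * w2fun w)) := by
  have h0 := w2fun_pos hw
  have h3 := one_le_two_sub_three_mul_w2fun w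
  rw [le_div_iff₀ (by positivity)]
  -- `3 v (2 - 3 v) = 1 - (3 v - 1) ^ 2`
  nlinarith [sq_nonneg (3 * w2fun w - 1)]

theorem Dmin'_half : Dmin' (1 / 2) = 0 := by
  rw [Dmin', show (1 : ℝ) - 1 / 2 = 1 / 2 by norm_num, sub_self]

theorem Dmin_half : Dmin (1 / 2) = 0 := by
  norm_num [Dmin, w2fun_half]

theorem Dmin_one : Dmin 1 = log 6 := by
  norm_num [Dmin, w2fun_one]

theorem Dmin_one_sub (w : ℝ) : Dmin (1 - w) = Dmin w := by
  rw [Dmin, Dmin, w2fun_one_sub, sub_sub_cancel]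
  ring

theorem three_halves_le_log_six : 3 / 2 ≤ log 6 := by
  rw [le_log_iff_exp_le (by norm_num)]
  have hcube : exp 1 ^ 3 < 3 ^ 3 := pow_lt_pow_left₀ exp_one_lt_three (exp_pos 1).le (by norm_num)
  have hsq : exp (3 / 2) ^ 2 = exp 1 ^ 3 := by
    rw [← exp_nat_mul, ← exp_nat_mul]
    norm_num
  nlinarith [exp_pos (3 / 2)]

theorem Icc_half_subset_Ioo (hw : w < 1) : Icc (1 / 2) w ⊆ Ioo 0 1 :=
  fun _ hx => ⟨by linarith [hx.1], by linarith [hx.2]⟩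

theorem mul_sub_half_le_Dmin' (hw : w ∈ Ico (1 / 2) 1) : 12 * (w - 1 / 2) ≤ Dmin' w := by
  have hsub := Icc_half_subset_Ioo hw.2
  refine le_of_hasDerivAt_le (f := fun x => 12 * (x - 1 / 2)) (f' := fun _ => 12)
    (g' := fun x => 4 / (w2fun x * (2 - 3 * w2fun x)))
    (fun x _ => ((hasDerivAt_id x).sub_const (1 / 2)).const_mul 12 |>.congr_deriv (mul_one 12))
    (fun x hx => hasDerivAt_Dmin' (hsub hx)) (by rw [Dmin'_half]; norm_num)
    (fun x hx => twelve_le_four_div_w2fun_mul (hsub (Ico_subset_Icc_self hx))) hw.1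

theorem sq_le_Dmin_of_mem_Ico (hw : w ∈ Ico (1 / 2) 1) : 6 * (1 / 2 - w) ^ 2 ≤ Dmin w := by
  have hsub := Icc_half_subset_Ioo hw.2
  refine le_of_hasDerivAt_le (f := fun x => 6 * (1 / 2 - x) ^ 2) (f' := fun x => 12 * (x - 1 / 2))
    (g' := Dmin')
    (fun x _ => (((hasDerivAt_id x).const_sub (1 / 2)).pow 2 |>.const_mul 6).congr_deriv
      (by simp only [id]; ring))
    (fun x hx => hasDerivAt_Dmin (hsub hx)) (by rw [Dmin_half]; norm_num)
    (fun x hx => mul_sub_half_le_Dmin' ⟨hx.1, hx.2.trans hw.2⟩) hw.1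

theorem sq_le_Dmin_of_mem_Icc (hw : w ∈ Icc (1 / 2) 1) : 6 * (1 / 2 - w) ^ 2 ≤ Dmin w := by
  rcases hw.2.eq_or_lt with rfl | hw1
  · rw [Dmin_one]
    linarith [three_halves_le_log_six]
  · exact sq_le_Dmin_of_mem_Ico ⟨hw.1, hw1⟩

end

theorem stmt_9 (w₁ : ℝ) (hw : w₁ ∈ Set.Icc (0 : ℝ) 1) :
    6 * (1 / 2 - w₁) ^ 2 ≤ Dmin w₁ := by
  rcases le_total (1 / 2) w₁ with h | h
  · exact sq_le_Dmin_of_mem_Icc ⟨h, hw.2⟩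
  · rw [← Dmin_one_sub, show 1 / 2 - w₁ = -(1 / 2 - (1 - w₁)) by ring, neg_sq]
    exact sq_le_Dmin_of_mem_Icc ⟨by linarith, by linarith [hw.1]⟩
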